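/- arXiv:1105.1212 — 2 statements merged into one kernel-verified Lean document; each statement's English description precedes it below -/
import Mathlib

section
/- Let P be a K×K row-stochastic real matrix, μ a probability vector on {1,…,K}, a₀, a₁ : {1,…,K} → ℝ, and λ = max_{1≤k≤K} Σ_{j=1}^{K} P_{kj} a₁(j)². Let (Z_t)_{t≥1} be a Markov chain on {1,…,K} with transition matrix P and initial distribution μ. If λ < 1, then the series Σ_{m=0}^{∞} E[(Π_{u=2}^{m+1} a₁(Z_u)²) · a₀(Z₁)²] converges and its sum is at most (μ′ φ₀² 𝟙) / (1 − λ), where μ′ φ₀² 𝟙 = Σ_{k=1}^{K} μ_k a₀(k)². -/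
/-!
Summing over the paths of the chain, the `m`-th expectation is `μ' φ₀² Q^m 𝟙` with
`Q = P φ₁² = P · diag(a₁²)`. The matrix `Q` is nonnegative with row sums at most `λ`, so
`Q^m 𝟙 ≤ λ^m 𝟙` entrywise and the series is dominated by `(μ' φ₀² 𝟙) ∑ λ^m`.
-/

open MeasureTheory Finset Matrix

namespace Matrix

variable {ι : Type*} [Fintype ι] [DecidableEq ι]

theorem sum_paths_mul_prod_mul_eq_dotProduct_pow_mulVec {R : Type*} [CommSemiring R]
    (Q : Matrix ι ι R) (m : ℕ) (c v : ι → R) :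
    ∑ z : Fin (m + 1) → ι, c (z 0) * (∏ i : Fin m, Q (z i.castSucc) (z i.succ)) * v (z (Fin.last m))
      = c ⬝ᵥ (Q ^ m *ᵥ v) := by
  induction m generalizing c with
  | zero =>
    rw [← (Equiv.funUnique (Fin 1) ι).symm.sum_comp]
    simp [dotProduct]
  | succ m ih =>
    rw [← (Fin.consEquiv fun _ => ι).sum_comp, Fintype.sum_prod_type, pow_succ', ← mulVec_mulVec]
    refine sum_congr rfl fun k _ => ?_
    simp only [Fin.consEquiv_apply, Fin.prod_univ_succ, Fin.cons_zero, Fin.cons_succ, Fin.cons_last,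
      Fin.castSucc_zero, ← Fin.succ_castSucc]
    rw [mulVec, ← ih (Q k), mul_sum]
    exact sum_congr rfl fun z _ => by ring

variable {Q : Matrix ι ι ℝ} {r : ℝ}

theorem pow_mulVec_one_le (hQ : ∀ i j, 0 ≤ Q i j) (hr0 : 0 ≤ r) (hr : ∀ i, ∑ j, Q i j ≤ r)
    (m : ℕ) (i : ι) : (Q ^ m *ᵥ 1) i ≤ r ^ m := by
  induction m generalizing i with
  | zero => simp
  | succ m ih =>
    rw [pow_succ', ← mulVec_mulVec]
    calc (Q *ᵥ (Q ^ m *ᵥ 1)) i = ∑ j, Q i j * (Q ^ m *ᵥ 1) j := rfl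
      _ ≤ ∑ j, Q i j * r ^ m := by gcongr with j; exacts [hQ i j, ih j]
      _ = r ^ m * ∑ j, Q i j := by rw [mul_sum]; simp_rw [mul_comm]
      _ ≤ r ^ m * r := by gcongr; exact hr i
      _ = r ^ (m + 1) := (pow_succ r m).symm

theorem dotProduct_pow_mulVec_one_le (hQ : ∀ i j, 0 ≤ Q i j) (hr0 : 0 ≤ r)
    (hr : ∀ i, ∑ j, Q i j ≤ r) {c : ι → ℝ} (hc : ∀ k, 0 ≤ c k) (m : ℕ) :
    c ⬝ᵥ (Q ^ m *ᵥ 1) ≤ r ^ m * ∑ k, c k := by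
  rw [dotProduct, mul_sum]
  refine sum_le_sum fun k _ => ?_
  rw [mul_comm (r ^ m)]
  exact mul_le_mul_of_nonneg_left (pow_mulVec_one_le hQ hr0 hr m k) (hc k)

end Matrix

theorem integral_comp_eq_sum_measureReal_preimage {Ω α : Type*} [MeasurableSpace Ω] {μ : Measure Ω}
    [IsFiniteMeasure μ] [Fintype α] [MeasurableSpace α] [MeasurableSingletonClass α] {φ : Ω → α}
    (hφ : Measurable φ) (f : α → ℝ) :
    ∫ ω, f (φ ω) ∂μ = ∑ a, μ.real (φ ⁻¹' {a}) * f a := by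
  rw [← integral_map hφ.aemeasurable (Measurable.of_discrete).aestronglyMeasurable,
    integral_fintype .of_finite]
  simp [map_measureReal_apply hφ (measurableSet_singleton _)]

theorem prod_Icc_one_eq_prod_fin {M : Type*} [CommMonoid M] (f : ℕ → M) (m : ℕ) :
    ∏ u ∈ Icc 1 m, f u = ∏ i : Fin m, f (i + 1) := by
  rw [Fin.prod_univ_eq_prod_range (fun i => f (i + 1)), ← Ico_add_one_right_eq_Icc, range_eq_Ico,
    prod_Ico_add' f 0 m 1, zero_add]

theorem summable_and_tsum_le_of_le_geometric {s : ℕ → ℝ} {r C : ℝ} (hs0 : ∀ m, 0 ≤ s m)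
    (hs : ∀ m, s m ≤ r ^ m * C) (hr0 : 0 ≤ r) (hr1 : r < 1) :
    Summable s ∧ ∑' m, s m ≤ C / (1 - r) := by
  have hgeo : Summable fun m => r ^ m * C := (summable_geometric_of_lt_one hr0 hr1).mul_right C
  have hsum : Summable s := .of_nonneg_of_le hs0 hs hgeo
  refine ⟨hsum, ?_⟩
  calc ∑' m, s m ≤ ∑' m, r ^ m * C := hsum.tsum_le_tsum hs hgeo
    _ = C / (1 - r) := by rw [tsum_mul_right, tsum_geometric_of_lt_one hr0 hr1, div_eq_inv_mul]

section MarkovChain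

variable {ι Ω : Type*} [Fintype ι] [MeasurableSpace ι] [MeasurableSingletonClass ι]
  {P : Matrix ι ι ℝ} {μvec : ι → ℝ} [MeasurableSpace Ω] {μpr : Measure Ω} [IsFiniteMeasure μpr]
  {Z : ℕ → Ω → ι}

theorem integral_comp_markov_path (hP0 : ∀ i j, 0 ≤ P i j) (hμ0 : ∀ k, 0 ≤ μvec k)
    (hZmeas : ∀ t, Measurable (Z t))
    (hZ : ∀ (n : ℕ) (z : Fin (n + 1) → ι),
      μpr {ω | ∀ i : Fin (n + 1), Z i ω = z i} =
        ENNReal.ofReal (μvec (z 0) * ∏ i : Fin n, P (z i.castSucc) (z i.succ)))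
    (m : ℕ) (f : (Fin (m + 1) → ι) → ℝ) :
    ∫ ω, f (fun i => Z i ω) ∂μpr
      = ∑ z, (μvec (z 0) * ∏ i : Fin m, P (z i.castSucc) (z i.succ)) * f z := by
  rw [integral_comp_eq_sum_measureReal_preimage (φ := fun ω (i : Fin (m + 1)) => Z i ω)
    (measurable_pi_lambda _ fun i => hZmeas i)]
  refine sum_congr rfl fun z _ => ?_
  have hpath : (fun ω i => Z (i : Fin (m + 1)) ω) ⁻¹' {z}
      = {ω | ∀ i : Fin (m + 1), Z i ω = z i} := by
    ext ω
    simp [funext_iff]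
  rw [Measure.real, hpath, hZ, ENNReal.toReal_ofReal
    (mul_nonneg (hμ0 _) (prod_nonneg fun i _ => hP0 _ _))]

theorem integral_markov_prod_sq_eq_dotProduct [DecidableEq ι] (hP0 : ∀ i j, 0 ≤ P i j)
    (hμ0 : ∀ k, 0 ≤ μvec k) (hZmeas : ∀ t, Measurable (Z t))
    (hZ : ∀ (n : ℕ) (z : Fin (n + 1) → ι),
      μpr {ω | ∀ i : Fin (n + 1), Z i ω = z i} =
        ENNReal.ofReal (μvec (z 0) * ∏ i : Fin n, P (z i.castSucc) (z i.succ)))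
    (a₀ a₁ : ι → ℝ) (m : ℕ) :
    ∫ ω, (∏ u ∈ Icc 1 m, a₁ (Z u ω) ^ 2) * a₀ (Z 0 ω) ^ 2 ∂μpr
      = (fun k => μvec k * a₀ k ^ 2) ⬝ᵥ ((P * diagonal fun j => a₁ j ^ 2) ^ m *ᵥ 1) := by
  calc ∫ ω, (∏ u ∈ Icc 1 m, a₁ (Z u ω) ^ 2) * a₀ (Z 0 ω) ^ 2 ∂μpr
      = ∫ ω, (fun z : Fin (m + 1) → ι => (∏ i : Fin m, a₁ (z i.succ) ^ 2) * a₀ (z 0) ^ 2)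
          (fun i => Z i ω) ∂μpr := by
        simp [prod_Icc_one_eq_prod_fin, Fin.val_succ]
    _ = ∑ z : Fin (m + 1) → ι, (μvec (z 0) * ∏ i : Fin m, P (z i.castSucc) (z i.succ))
          * ((∏ i : Fin m, a₁ (z i.succ) ^ 2) * a₀ (z 0) ^ 2) :=
        integral_comp_markov_path hP0 hμ0 hZmeas hZ m
          fun z => (∏ i : Fin m, a₁ (z i.succ) ^ 2) * a₀ (z 0) ^ 2
    _ = ∑ z : Fin (m + 1) → ι, μvec (z 0) * a₀ (z 0) ^ 2
          * (∏ i : Fin m, (P * diagonal fun j => a₁ j ^ 2) (z i.castSucc) (z i.succ))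
          * (1 : ι → ℝ) (z (Fin.last m)) := by
        refine sum_congr rfl fun z _ => ?_
        simp only [mul_diagonal, prod_mul_distrib, Pi.one_apply]
        ring
    _ = _ := sum_paths_mul_prod_mul_eq_dotProduct_pow_mulVec _ m (fun k => μvec k * a₀ k ^ 2) 1

end MarkovChain

/-- `Z n` is the paper's `Z_{n+1}`. -/
theorem stmt_9_general (K : ℕ) (P : Matrix (Fin K) (Fin K) ℝ)
    (hP0 : ∀ i j, 0 ≤ P i j)
    (μvec : Fin K → ℝ) (hμ0 : ∀ k, 0 ≤ μvec k)
    (a₀ a₁ : Fin K → ℝ) (lam : ℝ)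
    (hlam : IsGreatest (Set.range fun k : Fin K => ∑ j, P k j * a₁ j ^ 2) lam)
    (hlt : lam < 1)
    {Ω : Type*} [MeasurableSpace Ω] (μpr : Measure Ω) [IsProbabilityMeasure μpr]
    (Z : ℕ → Ω → Fin K) (hZmeas : ∀ t, Measurable (Z t))
    (hZ : ∀ (n : ℕ) (z : Fin (n + 1) → Fin K),
      μpr {ω | ∀ i : Fin (n + 1), Z i ω = z i} =
        ENNReal.ofReal (μvec (z 0) * ∏ i : Fin n, P (z i.castSucc) (z i.succ))) :
    Summable (fun m : ℕ =>
        ∫ ω, (∏ u ∈ Finset.Icc 1 m, a₁ (Z u ω) ^ 2) * a₀ (Z 0 ω) ^ 2 ∂μpr) ∧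
      (∑' m : ℕ, ∫ ω, (∏ u ∈ Finset.Icc 1 m, a₁ (Z u ω) ^ 2) * a₀ (Z 0 ω) ^ 2 ∂μpr)
        ≤ (∑ k, μvec k * a₀ k ^ 2) / (1 - lam) := by
  set Q : Matrix (Fin K) (Fin K) ℝ := P * diagonal fun j => a₁ j ^ 2
  have hQ0 : ∀ i j, 0 ≤ Q i j := fun i j => by
    simpa only [Q, mul_diagonal] using mul_nonneg (hP0 i j) (sq_nonneg (a₁ j))
  have hQrow : ∀ i, ∑ j, Q i j ≤ lam := fun i => by
    simpa only [Q, mul_diagonal] using hlam.2 ⟨i, rfl⟩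
  have hlam0 : 0 ≤ lam := by
    obtain ⟨k, hk⟩ := hlam.1
    exact hk ▸ sum_nonneg fun j _ => mul_nonneg (hP0 k j) (sq_nonneg _)
  refine summable_and_tsum_le_of_le_geometric
    (fun m => integral_nonneg fun ω => by positivity) (fun m => ?_) hlam0 hlt
  rw [integral_markov_prod_sq_eq_dotProduct hP0 hμ0 hZmeas hZ]
  exact dotProduct_pow_mulVec_one_le hQ0 hlam0 hQrow (fun k => mul_nonneg (hμ0 k) (sq_nonneg _)) m

/-- Under `λ = max_k ∑_j P k j a₁(j)² < 1`, the series
`∑_{m=0}^∞ E[(∏_{u=2}^{m+1} a₁(Z_u)²) a₀(Z₁)²]` converges and its sum is at most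
`(∑_k μ_k a₀(k)²) / (1 - λ)`.  Here `Z n` stands for `Z_{n+1}`. -/
theorem stmt_9 (K : ℕ) (P : Matrix (Fin K) (Fin K) ℝ)
    (hP0 : ∀ i j, 0 ≤ P i j) (hP1 : ∀ i, ∑ j, P i j = 1)
    (μvec : Fin K → ℝ) (hμ0 : ∀ k, 0 ≤ μvec k) (hμ1 : ∑ k, μvec k = 1)
    (a₀ a₁ : Fin K → ℝ) (lam : ℝ)
    (hlam : IsGreatest (Set.range fun k : Fin K => ∑ j, P k j * a₁ j ^ 2) lam)
    (hlt : lam < 1)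
    {Ω : Type*} [MeasurableSpace Ω] (μpr : Measure Ω) [IsProbabilityMeasure μpr]
    (Z : ℕ → Ω → Fin K) (hZmeas : ∀ t, Measurable (Z t))
    (hZ : ∀ (n : ℕ) (z : Fin (n + 1) → Fin K),
      μpr {ω | ∀ i : Fin (n + 1), Z i ω = z i} =
        ENNReal.ofReal (μvec (z 0) * ∏ i : Fin n, P (z i.castSucc) (z i.succ))) :
    Summable (fun m : ℕ =>
        ∫ ω, (∏ u ∈ Finset.Icc 1 m, a₁ (Z u ω) ^ 2) * a₀ (Z 0 ω) ^ 2 ∂μpr) ∧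
      (∑' m : ℕ, ∫ ω, (∏ u ∈ Finset.Icc 1 m, a₁ (Z u ω) ^ 2) * a₀ (Z 0 ω) ^ 2 ∂μpr)
        ≤ (∑ k, μvec k * a₀ k ^ 2) / (1 - lam) :=
  stmt_9_general K P hP0 μvec hμ0 a₀ a₁ lam hlam hlt μpr Z hZmeas hZ
end

section
/- Let P be a K×K row-stochastic real matrix, μ a probability vector on {1,…,K}, a₁ : {1,…,K} → ℝ, and λ = max_{1≤k≤K} Σ_{j=1}^{K} P_{kj} a₁(j)². Let (Z_t)_{t≥1} be a Markov chain on {1,…,K} with transition matrix P and initial distribution μ. Then for all m ≥ 0 and n ≥ 0, E[(Π_{i=2}^{m+1} a₁(Z_i)) · (Π_{j=2}^{n+1} a₁(Z_j))] ≤ λ^{(m+n)/2}. -/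
open MeasureTheory

/-! By Cauchy–Schwarz the cross term is at most `√(E[A_m²]) √(E[A_n²])`, where
`A_m = ∏_{i=1}^m a(Z_i)`. The second moment `E[A_m²]` is a sum over paths of the path
probability times `∏ a(z_i)²`; summing out the last state produces the factor
`∑_j P(z_{m-1}, j) a(j)² ≤ λ`, so `E[A_m²] ≤ λ^m` by induction on `m`. -/

section Paths

variable {S : Type*}

def pathWeight (P : Matrix S S ℝ) (μ₀ : S → ℝ) (N : ℕ) (z : Fin (N + 1) → S) : ℝ :=
  μ₀ (z 0) * ∏ i : Fin N, P (z i.castSucc) (z i.succ)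

def pathProd (a : S → ℝ) (m : ℕ) (z : Fin (m + 1) → S) : ℝ :=
  ∏ i : Fin m, a (z i.succ)

variable {P : Matrix S S ℝ} {μ₀ : S → ℝ}

lemma pathWeight_nonneg (hP0 : ∀ i j, 0 ≤ P i j) (hμ0 : ∀ k, 0 ≤ μ₀ k)
    (N : ℕ) (z : Fin (N + 1) → S) : 0 ≤ pathWeight P μ₀ N z :=
  mul_nonneg (hμ0 _) (Finset.prod_nonneg fun _ _ => hP0 _ _)

lemma pathWeight_snoc (N : ℕ) (z : Fin (N + 1) → S) (j : S) :
    pathWeight P μ₀ (N + 1) (Fin.snoc z j) = pathWeight P μ₀ N z * P (z (Fin.last N)) j := by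
  have h0 : (Fin.snoc z j : Fin (N + 2) → S) 0 = z 0 := Fin.snoc_castSucc (i := 0) ..
  simp only [pathWeight, Fin.prod_univ_castSucc, h0, Fin.succ_castSucc, Fin.snoc_castSucc,
    Fin.succ_last, Fin.snoc_last, mul_assoc]

lemma pathProd_snoc (a : S → ℝ) (m : ℕ) (z : Fin (m + 1) → S) (j : S) :
    pathProd a (m + 1) (Fin.snoc z j) = pathProd a m z * a j := by
  simp only [pathProd, Fin.prod_univ_castSucc, Fin.succ_castSucc, Fin.snoc_castSucc,
    Fin.succ_last, Fin.snoc_last]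

lemma Fintype.sum_pi_fin_succ_snoc [Fintype S] {M : Type*} [AddCommMonoid M] (N : ℕ)
    (f : (Fin (N + 1) → S) → M) :
    ∑ z, f z = ∑ z : Fin N → S, ∑ j, f (Fin.snoc z j) := by
  rw [← (Fin.snocEquiv fun _ => S).sum_comp, Fintype.sum_prod_type, Finset.sum_comm]
  rfl

theorem sum_pathWeight_mul_pathProd_sq_le [Fintype S] {a : S → ℝ} {lam : ℝ}
    (hP0 : ∀ i j, 0 ≤ P i j) (hμ0 : ∀ k, 0 ≤ μ₀ k) (hμ1 : ∑ k, μ₀ k = 1)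
    (hlam0 : 0 ≤ lam) (hlam : ∀ k, ∑ j, P k j * a j ^ 2 ≤ lam) (m : ℕ) :
    ∑ z, pathWeight P μ₀ m z * pathProd a m z ^ 2 ≤ lam ^ m := by
  induction m with
  | zero =>
    rw [pow_zero, ← hμ1]
    exact (Fintype.sum_equiv (Equiv.funUnique (Fin 1) S) _ _ fun z => by
      simp [pathWeight, pathProd]).le
  | succ m ih =>
    calc ∑ z, pathWeight P μ₀ (m + 1) z * pathProd a (m + 1) z ^ 2
        = ∑ z, pathWeight P μ₀ m z * pathProd a m z ^ 2 *
            ∑ j, P (z (Fin.last m)) j * a j ^ 2 := by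
          rw [Fintype.sum_pi_fin_succ_snoc]
          refine Finset.sum_congr rfl fun z _ => ?_
          simp only [Finset.mul_sum, pathWeight_snoc, pathProd_snoc]
          exact Finset.sum_congr rfl fun j _ => by ring
      _ ≤ ∑ z, pathWeight P μ₀ m z * pathProd a m z ^ 2 * lam :=
          Finset.sum_le_sum fun z _ => mul_le_mul_of_nonneg_left (hlam _)
            (mul_nonneg (pathWeight_nonneg hP0 hμ0 m z) (sq_nonneg _))
      _ ≤ lam ^ m * lam := by rw [← Finset.sum_mul]; gcongr
      _ = lam ^ (m + 1) := (pow_succ _ _).symm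

lemma prod_Icc_one_eq_pathProd {Ω : Type*} (a : S → ℝ) (Z : ℕ → Ω → S) (m : ℕ) (ω : Ω) :
    ∏ i ∈ Finset.Icc 1 m, a (Z i ω) = pathProd a m (fun i => Z i ω) := by
  simp only [pathProd, Fin.val_succ]
  rw [Fin.prod_univ_eq_prod_range (fun i => a (Z (i + 1) ω)), Finset.range_eq_Ico,
    Finset.prod_Ico_add' (fun i => a (Z i ω))]
  rfl

end Paths

section Integrals

variable {Ω α : Type*} [MeasurableSpace Ω] {μ : Measure Ω} [MeasurableSpace α]

lemma integral_comp_eq_sum [Fintype α] [MeasurableSingletonClass α] [IsFiniteMeasure μ]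
    {X : Ω → α} (hX : Measurable X) (g : α → ℝ) :
    ∫ ω, g (X ω) ∂μ = ∑ x, μ.real (X ⁻¹' {x}) * g x := by
  rw [← integral_map hX.aemeasurable (measurable_of_finite g).aestronglyMeasurable,
    integral_fintype .of_finite]
  simp only [map_measureReal_apply hX (measurableSet_singleton _), smul_eq_mul]

lemma memLp_comp_of_finite [Finite α] [DiscreteMeasurableSpace α] [IsFiniteMeasure μ]
    {X : Ω → α} (hX : Measurable X) (g : α → ℝ) (p : ENNReal) :
    MemLp (fun ω => g (X ω)) p μ :=
  (memLp_map_measure_iff (measurable_of_finite g).aestronglyMeasurable hX.aemeasurable).1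
    .of_discrete

theorem integral_mul_le_sqrt_mul_sqrt {f g : Ω → ℝ} (hf : MemLp f 2 μ) (hg : MemLp g 2 μ) :
    ∫ ω, f ω * g ω ∂μ ≤ √(∫ ω, f ω ^ 2 ∂μ) * √(∫ ω, g ω ^ 2 ∂μ) := by
  have h2 : ENNReal.ofReal 2 = 2 := by norm_num
  calc ∫ ω, f ω * g ω ∂μ ≤ ∫ ω, ‖f ω‖ * ‖g ω‖ ∂μ := by
        refine integral_mono (hf.integrable_mul hg) (hf.norm.integrable_mul hg.norm) fun ω => ?_
        simp only [Real.norm_eq_abs, ← abs_mul]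
        exact le_abs_self _
    _ ≤ (∫ ω, ‖f ω‖ ^ (2 : ℝ) ∂μ) ^ (1 / 2 : ℝ) * (∫ ω, ‖g ω‖ ^ (2 : ℝ) ∂μ) ^ (1 / 2 : ℝ) :=
        integral_mul_norm_le_Lp_mul_Lq .two_two (h2 ▸ hf) (h2 ▸ hg)
    _ = √(∫ ω, f ω ^ 2 ∂μ) * √(∫ ω, g ω ^ 2 ∂μ) := by
        simp only [Real.rpow_two, Real.norm_eq_abs, sq_abs, Real.sqrt_eq_rpow]

end Integrals

lemma Real.sqrt_pow_mul_sqrt_pow {x : ℝ} (hx : 0 ≤ x) (m n : ℕ) :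
    √(x ^ m) * √(x ^ n) = x ^ (((m : ℝ) + n) / 2) := by
  rw [← Real.sqrt_mul (pow_nonneg hx m), ← pow_add, Real.sqrt_eq_rpow, ← Real.rpow_natCast,
    ← Real.rpow_mul hx]
  push_cast
  ring_nf

section MarkovChain

variable {S Ω : Type*} [Fintype S] [MeasurableSpace S] [MeasurableSingletonClass S]
  [MeasurableSpace Ω] {μ : Measure Ω} [IsFiniteMeasure μ]
  {P : Matrix S S ℝ} {μ₀ : S → ℝ} {Z : ℕ → Ω → S}

lemma integral_comp_path_eq_sum_pathWeight (hP0 : ∀ i j, 0 ≤ P i j) (hμ0 : ∀ k, 0 ≤ μ₀ k)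
    (hZmeas : ∀ t, Measurable (Z t)) (N : ℕ)
    (hZ : ∀ z : Fin (N + 1) → S,
      μ {ω | ∀ i : Fin (N + 1), Z i ω = z i} = ENNReal.ofReal (pathWeight P μ₀ N z))
    (g : (Fin (N + 1) → S) → ℝ) :
    ∫ ω, g (fun i => Z i ω) ∂μ = ∑ z, pathWeight P μ₀ N z * g z := by
  rw [integral_comp_eq_sum (X := fun ω (i : Fin (N + 1)) => Z i ω)
    (measurable_pi_lambda _ fun i => hZmeas i)]
  refine Finset.sum_congr rfl fun z _ => ?_
  have hpre : (fun ω (i : Fin (N + 1)) => Z i ω) ⁻¹' {z} = {ω | ∀ i : Fin (N + 1), Z i ω = z i} := by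
    ext ω
    simp [funext_iff]
  rw [hpre, measureReal_def, hZ, ENNReal.toReal_ofReal (pathWeight_nonneg hP0 hμ0 N z)]

lemma integral_prod_Icc_sq_le {a : S → ℝ} {lam : ℝ} (hP0 : ∀ i j, 0 ≤ P i j)
    (hμ0 : ∀ k, 0 ≤ μ₀ k) (hμ1 : ∑ k, μ₀ k = 1) (hlam0 : 0 ≤ lam)
    (hlam : ∀ k, ∑ j, P k j * a j ^ 2 ≤ lam) (hZmeas : ∀ t, Measurable (Z t))
    (hZ : ∀ (n : ℕ) (z : Fin (n + 1) → S),
      μ {ω | ∀ i : Fin (n + 1), Z i ω = z i} = ENNReal.ofReal (pathWeight P μ₀ n z))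
    (m : ℕ) :
    ∫ ω, (∏ i ∈ Finset.Icc 1 m, a (Z i ω)) ^ 2 ∂μ ≤ lam ^ m := by
  simp only [prod_Icc_one_eq_pathProd]
  rw [integral_comp_path_eq_sum_pathWeight hP0 hμ0 hZmeas m (hZ m) (pathProd a m · ^ 2)]
  exact sum_pathWeight_mul_pathProd_sq_le hP0 hμ0 hμ1 hlam0 hlam m

lemma memLp_prod_Icc (a : S → ℝ) (hZmeas : ∀ t, Measurable (Z t)) (m : ℕ) (p : ENNReal) :
    MemLp (fun ω => ∏ i ∈ Finset.Icc 1 m, a (Z i ω)) p μ := by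
  simp only [prod_Icc_one_eq_pathProd]
  exact memLp_comp_of_finite (X := fun ω (i : Fin (m + 1)) => Z i ω)
    (measurable_pi_lambda _ fun i => hZmeas i) _ p

end MarkovChain

theorem stmt_17_general (K : ℕ) (P : Matrix (Fin K) (Fin K) ℝ)
    (hP0 : ∀ i j, 0 ≤ P i j)
    (μvec : Fin K → ℝ) (hμ0 : ∀ k, 0 ≤ μvec k) (hμ1 : ∑ k, μvec k = 1)
    (a₁ : Fin K → ℝ) (lam : ℝ)
    (hlam : IsGreatest (Set.range fun k : Fin K => ∑ j, P k j * a₁ j ^ 2) lam)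
    {Ω : Type*} [MeasurableSpace Ω] (μpr : Measure Ω) [IsProbabilityMeasure μpr]
    (Z : ℕ → Ω → Fin K) (hZmeas : ∀ t, Measurable (Z t))
    (hZ : ∀ (n : ℕ) (z : Fin (n + 1) → Fin K),
      μpr {ω | ∀ i : Fin (n + 1), Z i ω = z i} =
        ENNReal.ofReal (μvec (z 0) * ∏ i : Fin n, P (z i.castSucc) (z i.succ)))
    (m n : ℕ) :
    ∫ ω, (∏ i ∈ Finset.Icc 1 m, a₁ (Z i ω)) * ∏ j ∈ Finset.Icc 1 n, a₁ (Z j ω) ∂μpr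
      ≤ lam ^ (((m : ℝ) + (n : ℝ)) / 2) := by
  obtain ⟨⟨k₀, rfl⟩, hmax⟩ := hlam
  have hlam0 : 0 ≤ ∑ j, P k₀ j * a₁ j ^ 2 :=
    Finset.sum_nonneg fun j _ => mul_nonneg (hP0 _ _) (sq_nonneg _)
  have hsq := integral_prod_Icc_sq_le hP0 hμ0 hμ1 hlam0 (fun k => hmax ⟨k, rfl⟩) hZmeas hZ
  calc _ ≤ √(∫ ω, (∏ i ∈ Finset.Icc 1 m, a₁ (Z i ω)) ^ 2 ∂μpr) *
          √(∫ ω, (∏ j ∈ Finset.Icc 1 n, a₁ (Z j ω)) ^ 2 ∂μpr) :=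
        integral_mul_le_sqrt_mul_sqrt (memLp_prod_Icc a₁ hZmeas m 2)
          (memLp_prod_Icc a₁ hZmeas n 2)
    _ ≤ √((∑ j, P k₀ j * a₁ j ^ 2) ^ m) * √((∑ j, P k₀ j * a₁ j ^ 2) ^ n) := by
        gcongr <;> exact hsq _
    _ = _ := Real.sqrt_pow_mul_sqrt_pow hlam0 m n

/-- Cross-term estimate: with `λ = max_k ∑_j P k j a₁(j)²`, for all `m, n ≥ 0`,
`E[(∏_{i=2}^{m+1} a₁(Z_i)) (∏_{j=2}^{n+1} a₁(Z_j))] ≤ λ^{(m+n)/2}`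
(real power).  Here `Z n` stands for `Z_{n+1}`. -/
theorem stmt_17 (K : ℕ) (P : Matrix (Fin K) (Fin K) ℝ)
    (hP0 : ∀ i j, 0 ≤ P i j) (hP1 : ∀ i, ∑ j, P i j = 1)
    (μvec : Fin K → ℝ) (hμ0 : ∀ k, 0 ≤ μvec k) (hμ1 : ∑ k, μvec k = 1)
    (a₁ : Fin K → ℝ) (lam : ℝ)
    (hlam : IsGreatest (Set.range fun k : Fin K => ∑ j, P k j * a₁ j ^ 2) lam)
    {Ω : Type*} [MeasurableSpace Ω] (μpr : Measure Ω) [IsProbabilityMeasure μpr]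
    (Z : ℕ → Ω → Fin K) (hZmeas : ∀ t, Measurable (Z t))
    (hZ : ∀ (n : ℕ) (z : Fin (n + 1) → Fin K),
      μpr {ω | ∀ i : Fin (n + 1), Z i ω = z i} =
        ENNReal.ofReal (μvec (z 0) * ∏ i : Fin n, P (z i.castSucc) (z i.succ)))
    (m n : ℕ) :
    ∫ ω, (∏ i ∈ Finset.Icc 1 m, a₁ (Z i ω)) * ∏ j ∈ Finset.Icc 1 n, a₁ (Z j ω) ∂μpr
      ≤ lam ^ (((m : ℝ) + (n : ℝ)) / 2) :=
  stmt_17_general K P hP0 μvec hμ0 hμ1 a₁ lam hlam μpr Z hZmeas hZ m n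
end
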